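/- Let N > 2 be real and m : (0,∞) → (0,∞) with r ↦ m(r)/r^N non-increasing, ν := lim_{r→0⁺} m(r)/r^N < ∞, and F(r) := ∫_r^∞ s/m(s) ds finite for all r. Then lim_{r→0⁺} F(r)/r^{2-N} = 1/((N-2)ν). -/
import Mathlib


open MeasureTheory Set Filter

/-- Small-scale asymptotics of the auxiliary function `F`. -/
theorem stmt1 (N : ℝ) (hN : 2 < N) (m : ℝ → ℝ)
    (hm_pos : ∀ r, 0 < r → 0 < m r)
    (hBG : ∀ r s : ℝ, 0 < r → r ≤ s → m s / s ^ N ≤ m r / r ^ N)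
    (ν : ℝ)
    (hν : Tendsto (fun r => m r / r ^ N) (nhdsWithin 0 (Ioi 0)) (nhds ν))
    (F : ℝ → ℝ) (hF : ∀ r, F r = ∫ s in Ioi r, s / m s)
    (hFint : ∀ r, 0 < r → IntegrableOn (fun s => s / m s) (Ioi r)) :
    Tendsto (fun r => F r / r ^ (2 - N)) (nhdsWithin 0 (Ioi 0))
      (nhds (1 / ((N - 2) * ν))) := by
  have hN2 : (0:ℝ) < N - 2 := by linarith
  -- ν is an upper bound for m s / s ^ N
  have hub : ∀ s, 0 < s → m s / s ^ N ≤ ν := by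
    intro s hs
    refine ge_of_tendsto hν ?_
    filter_upwards [Ioo_mem_nhdsGT_of_mem (left_mem_Ico.mpr hs)] with r hr
    exact hBG r s hr.1 hr.2.le
  have hν0 : 0 < ν :=
    lt_of_lt_of_le (div_pos (hm_pos 1 one_pos) (Real.rpow_pos_of_pos one_pos N))
      (hub 1 one_pos)
  -- pointwise lower bound for the integrand
  have hlowpt : ∀ s, 0 < s → s ^ (1 - N) / ν ≤ s / m s := by
    intro s hs
    rw [div_le_div_iff₀ hν0 (hm_pos s hs)]
    have hms : m s ≤ ν * s ^ N := by
      have := hub s hs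
      rw [div_le_iff₀ (Real.rpow_pos_of_pos hs N)] at this
      linarith
    have hsa : s ^ (1 - N) * s ^ N = s := by
      rw [← Real.rpow_add hs]; norm_num
    calc s ^ (1 - N) * m s ≤ s ^ (1 - N) * (ν * s ^ N) :=
          mul_le_mul_of_nonneg_left hms (Real.rpow_nonneg hs.le _)
      _ = s ^ (1 - N) * s ^ N * ν := by ring
      _ = s * ν := by rw [hsa]
  -- nonnegativity of the tail
  have htail : ∀ d : ℝ, 0 < d → 0 ≤ ∫ s in Ioi d, s / m s := by
    intro d hd
    refine setIntegral_nonneg measurableSet_Ioi fun s hs => ?_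
    have hs0 : 0 < s := hd.trans hs
    exact div_nonneg hs0.le (hm_pos s hs0).le
  -- the power function tends to 0
  have hpow : Tendsto (fun r : ℝ => r ^ (N - 2)) (nhdsWithin 0 (Ioi 0)) (nhds 0) := by
    have h := (Real.continuousAt_rpow_const 0 (N - 2) (Or.inr (by linarith))).tendsto
    rw [Real.zero_rpow (by linarith : N - 2 ≠ 0)] at h
    exact h.mono_left nhdsWithin_le_nhds
  rw [Metric.tendsto_nhds]
  intro ε' hε'
  -- choose ε
  set ε : ℝ := min (ν / 2) (ε' * ((N - 2) * ν ^ 2) / 4) with hεdef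
  have hε : 0 < ε := lt_min (by linarith) (by positivity)
  have hεν : ε ≤ ν / 2 := min_le_left _ _
  have hνε : 0 < ν - ε := by linarith
  have hεb : ε ≤ ε' * ((N - 2) * ν ^ 2) / 4 := min_le_right _ _
  have hεL : 1 / ((N - 2) * (ν - ε)) ≤ 1 / ((N - 2) * ν) + ε' / 2 := by
    have hdiff : 1 / ((N - 2) * (ν - ε)) - 1 / ((N - 2) * ν) = ε / ((N - 2) * (ν - ε) * ν) := by
      field_simp
      ring
    have hbd : ε / ((N - 2) * (ν - ε) * ν) ≤ ε' / 2 := by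
      rw [div_le_iff₀ (by positivity : (0:ℝ) < (N - 2) * (ν - ε) * ν)]
      nlinarith [mul_nonneg (mul_nonneg (mul_nonneg hε'.le hN2.le)
        (show (0:ℝ) ≤ ν - ε - ν / 2 by linarith)) hν0.le]
    linarith
  -- choose δ from the convergence hypothesis
  obtain ⟨δ₀, hδ₀mem, hδ₀⟩ :=
    mem_nhdsGT_iff_exists_Ioo_subset.mp (Metric.tendsto_nhds.mp hν ε hε)
  set δ : ℝ := δ₀ / 2 with hδdef
  have hδ0 : 0 < δ := by
    have : (0:ℝ) < δ₀ := hδ₀mem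
    simp only [hδdef]; linarith
  have hnear : ∀ s, 0 < s → s ≤ δ → ν - ε < m s / s ^ N := by
    intro s hs hsδ
    have hδ₀pos : (0:ℝ) < δ₀ := hδ₀mem
    have := hδ₀ ⟨hs, by simp only [hδdef] at hsδ; linarith⟩
    simp only [Set.mem_setOf_eq, Real.dist_eq, abs_sub_lt_iff] at this
    linarith [this.2]
  -- pointwise upper bound for the integrand near 0
  have hupt : ∀ s, 0 < s → s ≤ δ → s / m s ≤ s ^ (1 - N) / (ν - ε) := by
    intro s hs hsδ
    rw [div_le_div_iff₀ (hm_pos s hs) hνε]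
    have hms : (ν - ε) * s ^ N ≤ m s := by
      have := (hnear s hs hsδ).le
      rw [le_div_iff₀ (Real.rpow_pos_of_pos hs N)] at this
      linarith
    have hsa : s ^ (1 - N) * s ^ N = s := by
      rw [← Real.rpow_add hs]; norm_num
    calc s * (ν - ε) = s ^ (1 - N) * s ^ N * (ν - ε) := by rw [hsa]
      _ = s ^ (1 - N) * ((ν - ε) * s ^ N) := by ring
      _ ≤ s ^ (1 - N) * m s :=
          mul_le_mul_of_nonneg_left hms (Real.rpow_nonneg hs.le _)
  -- eventual smallness of the error terms
  have hA : ∀ᶠ r in nhdsWithin 0 (Ioi 0), F δ * r ^ (N - 2) < ε' / 2 := by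
    have h := hpow.const_mul (F δ)
    rw [mul_zero] at h
    exact h.eventually_lt_const (by linarith)
  have hB : ∀ᶠ r in nhdsWithin 0 (Ioi 0),
      δ ^ (2 - N) / ((N - 2) * ν) * r ^ (N - 2) < ε' := by
    have h := hpow.const_mul (δ ^ (2 - N) / ((N - 2) * ν))
    rw [mul_zero] at h
    exact h.eventually_lt_const hε'
  filter_upwards [hA, hB, Ioo_mem_nhdsGT_of_mem (left_mem_Ico.mpr hδ0)]
    with r hAr hBr hr
  obtain ⟨hr0, hrδ⟩ := hr
  -- basic quantities
  have hR : 0 < r ^ (2 - N) := Real.rpow_pos_of_pos hr0 _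
  have hρ : 0 < r ^ (N - 2) := Real.rpow_pos_of_pos hr0 _
  have hρR : r ^ (N - 2) * r ^ (2 - N) = 1 := by
    rw [← Real.rpow_add hr0]; norm_num
  have hD : 0 < δ ^ (2 - N) := Real.rpow_pos_of_pos hδ0 _
  -- integrability facts
  have hint1 : IntegrableOn (fun s => s / m s) (Ioc r δ) :=
    (hFint r hr0).mono_set Ioc_subset_Ioi_self
  have hint2 : IntegrableOn (fun s : ℝ => s ^ (1 - N)) (Ioc r δ) := by
    rw [← intervalIntegrable_iff_integrableOn_Ioc_of_le hrδ.le]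
    exact intervalIntegral.intervalIntegrable_rpow
      (Or.inr (notMem_uIcc_of_lt hr0 hδ0))
  -- value of the model integral
  have hI : (∫ s in Ioc r δ, s ^ (1 - N)) =
      (r ^ (2 - N) - δ ^ (2 - N)) / (N - 2) := by
    rw [← intervalIntegral.integral_of_le hrδ.le,
      integral_rpow (Or.inr ⟨by linarith, notMem_uIcc_of_lt hr0 hδ0⟩)]
    have h2 : (1:ℝ) - N + 1 = 2 - N := by ring
    rw [h2]
    rw [div_eq_div_iff (by linarith : (2:ℝ) - N ≠ 0) (by linarith : N - 2 ≠ 0)]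
    ring
  -- splitting the integral
  have hsplit : F r = (∫ s in Ioc r δ, s / m s) + F δ := by
    rw [hF r, hF δ, ← setIntegral_union (Ioc_disjoint_Ioi le_rfl) measurableSet_Ioi
      hint1 (hFint δ hδ0), Ioc_union_Ioi_eq_Ioi hrδ.le]
  have hFδ0 : 0 ≤ F δ := by rw [hF δ]; exact htail δ hδ0
  -- lower bound for F r
  have hlow : (r ^ (2 - N) - δ ^ (2 - N)) / (N - 2) / ν ≤ F r := by
    have h1 : (∫ s in Ioc r δ, s ^ (1 - N) / ν) ≤ ∫ s in Ioc r δ, s / m s :=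
      setIntegral_mono_on (hint2.div_const ν) hint1 measurableSet_Ioc
        fun s hs => hlowpt s (hr0.trans hs.1)
    rw [integral_div, hI] at h1
    linarith [hsplit]
  -- upper bound for F r
  have hup : F r ≤ r ^ (2 - N) / (N - 2) / (ν - ε) + F δ := by
    have h1 : (∫ s in Ioc r δ, s / m s) ≤ ∫ s in Ioc r δ, s ^ (1 - N) / (ν - ε) :=
      setIntegral_mono_on hint1 (hint2.div_const (ν - ε)) measurableSet_Ioc
        fun s hs => hupt s (hr0.trans hs.1) hs.2
    rw [integral_div, hI] at h1
    have h2 : (r ^ (2 - N) - δ ^ (2 - N)) / (N - 2) / (ν - ε) ≤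
        r ^ (2 - N) / (N - 2) / (ν - ε) := by
      gcongr
      linarith
    linarith [hsplit]
  -- conclude
  have hinv : (r ^ (2 - N))⁻¹ = r ^ (N - 2) := (eq_inv_of_mul_eq_one_left hρR).symm
  have hg : F r / r ^ (2 - N) = F r * r ^ (N - 2) := by
    rw [div_eq_mul_inv, hinv]
  have hupmul : F r * r ^ (N - 2) ≤
      (r ^ (2 - N) / (N - 2) / (ν - ε) + F δ) * r ^ (N - 2) :=
    mul_le_mul_of_nonneg_right hup hρ.le
  have key1 : (r ^ (2 - N) / (N - 2) / (ν - ε) + F δ) * r ^ (N - 2) =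
      1 / ((N - 2) * (ν - ε)) + F δ * r ^ (N - 2) := by
    have h : (r ^ (2 - N) / (N - 2) / (ν - ε) + F δ) * r ^ (N - 2) =
        (r ^ (N - 2) * r ^ (2 - N)) / (N - 2) / (ν - ε) + F δ * r ^ (N - 2) := by
      ring
    rw [h, hρR]
    simp only [div_div]
  have hlowmul : ((r ^ (2 - N) - δ ^ (2 - N)) / (N - 2) / ν) * r ^ (N - 2) ≤
      F r * r ^ (N - 2) :=
    mul_le_mul_of_nonneg_right hlow hρ.le
  have key2 : ((r ^ (2 - N) - δ ^ (2 - N)) / (N - 2) / ν) * r ^ (N - 2) =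
      1 / ((N - 2) * ν) - δ ^ (2 - N) / ((N - 2) * ν) * r ^ (N - 2) := by
    have h : ((r ^ (2 - N) - δ ^ (2 - N)) / (N - 2) / ν) * r ^ (N - 2) =
        (r ^ (N - 2) * r ^ (2 - N)) / (N - 2) / ν
          - δ ^ (2 - N) / (N - 2) / ν * r ^ (N - 2) := by
      ring
    rw [h, hρR]
    simp only [div_div]
  rw [Real.dist_eq, abs_sub_lt_iff]
  constructor
  · rw [hg]
    linarith [key1 ▸ hupmul]
  · rw [hg]
    linarith [key2 ▸ hlowmul]
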